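/- Lemma 6: let m ≥ 2 and let n be the least natural number (n ≥ 1) with G(n, m) = 0. Then n is even, say n = 2·n₁ with n₁ ≥ 2, and G(n₁ − 1, m) = n₁; that is, the hereditary representation of the (n₁−1)-th term in its base n₁ is 1·n₁^1 + 0·n₁^0. -/

import Mathlib

/-- `hsub b u m` substitutes the value `u` for the base `b` throughout the
hereditary base-`b` representation of `m` (with `hsub b u 0 = 0`). -/
def hsub (b u : ℕ) (m : ℕ) : ℕ :=
  if m = 0 then 0
  else
    u ^ hsub b u (Nat.log b m) * (m / b ^ Nat.log b m) + hsub b u (m % b ^ Nat.log b m)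
termination_by m
decreasing_by
  · exact Nat.log_lt_self b (by assumption)
  · have hpos : 0 < b ^ Nat.log b m := by
      rcases Nat.eq_zero_or_pos b with hb | hb
      · simp [hb]
      · exact pow_pos hb _
    exact lt_of_lt_of_le (Nat.mod_lt _ hpos) (Nat.pow_log_le_self b (by assumption))

/-- Goodstein's base-change ("bumping") function: replace the base `b` by `b + 1`
throughout the hereditary base-`b` representation of `m` (with `B b 0 = 0`). -/
def B (b m : ℕ) : ℕ := hsub b (b + 1) m

/-- The Goodstein sequence of `m`: `G 1 m = m`, and `G (k+1) m = B (k+1) (G k m) - 1`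
for `k ≥ 1` (truncated subtraction), so the `k`-th term is written in hereditary
base `k + 1`. -/
def G : ℕ → ℕ → ℕ
  | 0, m => m
  | 1, m => m
  | (k + 2), m => B (k + 2) (G (k + 1) m) - 1

/-- The auxiliary Goodstein-type sequence: `L 1 k = k ^ k` (written in hereditary
base `k`), and `L (n+1) k = B (k+n-1) (L n k) - 1` for `n ≥ 1` (truncated
subtraction), so the `n`-th term is written in hereditary base `k + n - 1`. -/
def L : ℕ → ℕ → ℕ
  | 0, k => k ^ k
  | 1, k => k ^ k
  | (n + 2), k => B (k + n) (L (n + 1) k) - 1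

/-- `O b m` is the ordinal obtained by substituting `ω` for the base `b`
throughout the hereditary base-`b` representation of `m` (with `O b 0 = 0`). -/
noncomputable def O (b : ℕ) (m : ℕ) : Ordinal :=
  if m = 0 then 0
  else
    Ordinal.omega0 ^ O b (Nat.log b m) * ((m / b ^ Nat.log b m : ℕ) : Ordinal)
      + O b (m % b ^ Nat.log b m)
termination_by m
decreasing_by
  · exact Nat.log_lt_self b (by assumption)
  · have hpos : 0 < b ^ Nat.log b m := by
      rcases Nat.eq_zero_or_pos b with hb | hb
      · simp [hb]
      · exact pow_pos hb _
    exact lt_of_lt_of_le (Nat.mod_lt _ hpos) (Nat.pow_log_le_self b (by assumption))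

/-!
While a term `G j m` is at least its base `j + 1`, bumping the base raises it by at least one, so
the next term is no smaller. Once a term is below its base, every later base change leaves it
fixed and the sequence simply counts down by one. Let `n₁` be the first index with
`G n₁ m ≤ n₁`; then `n₁ ≤ G (n₁ - 1) m ≤ G n₁ m ≤ n₁`, so both terms equal `n₁`, and the
count-down from `G n₁ m = n₁` reaches `0` exactly at index `2 * n₁`.
-/

section hsub

variable {b u : ℕ}

theorem hsub_zero : hsub b u 0 = 0 := by
  rw [hsub, if_pos rfl]

theorem hsub_of_ne_zero {x : ℕ} (hx : x ≠ 0) :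
    hsub b u x =
      u ^ hsub b u (Nat.log b x) * (x / b ^ Nat.log b x) + hsub b u (x % b ^ Nat.log b x) := by
  rw [hsub, if_neg hx]

theorem hsub_of_lt {x : ℕ} (h : x < b) : hsub b u x = x := by
  rcases eq_or_ne x 0 with rfl | hx
  · exact hsub_zero
  · simp [hsub_of_ne_zero hx, Nat.log_of_lt h, hsub_zero, Nat.mod_one]

theorem pow_log_pos (b x : ℕ) : 0 < b ^ Nat.log b x := by
  rcases b.eq_zero_or_pos with rfl | hb
  · simp
  · positivity

theorem le_hsub (hbu : b ≤ u) (x : ℕ) : x ≤ hsub b u x := by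
  induction x using Nat.strong_induction_on with
  | _ x ih =>
  rcases eq_or_ne x 0 with rfl | hx
  · exact Nat.zero_le _
  set e := Nat.log b x
  have hpow : b ^ e ≤ u ^ hsub b u e :=
    calc b ^ e ≤ u ^ e := Nat.pow_le_pow_left hbu e
      _ ≤ u ^ hsub b u e := by
        rcases u.eq_zero_or_pos with rfl | hu
        · simp [e, Nat.le_zero.mp hbu, hsub_zero]
        · exact Nat.pow_le_pow_right hu (ih e (Nat.log_lt_self b hx))
  have hmod : x % b ^ e < x :=
    (Nat.mod_lt x (pow_log_pos b x)).trans_le (Nat.pow_log_le_self b hx)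
  rw [hsub_of_ne_zero hx]
  calc x = b ^ e * (x / b ^ e) + x % b ^ e := (Nat.div_add_mod x _).symm
    _ ≤ u ^ hsub b u e * (x / b ^ e) + hsub b u (x % b ^ e) :=
      add_le_add (Nat.mul_le_mul_right _ hpow) (ih _ hmod)

theorem lt_hsub {x : ℕ} (hb : 1 < b) (hbu : b < u) (hx : b ≤ x) : x < hsub b u x := by
  have hx0 : x ≠ 0 := by omega
  set e := Nat.log b x
  have hpow : b ^ e < u ^ hsub b u e :=
    calc b ^ e < u ^ e := Nat.pow_lt_pow_left hbu (Nat.log_pos hb hx).ne'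
      _ ≤ u ^ hsub b u e := Nat.pow_le_pow_right (by omega) (le_hsub hbu.le e)
  have hdigit : 0 < x / b ^ e := Nat.div_pos (Nat.pow_log_le_self b hx0) (pow_log_pos b x)
  rw [hsub_of_ne_zero hx0]
  calc x = b ^ e * (x / b ^ e) + x % b ^ e := (Nat.div_add_mod x _).symm
    _ < u ^ hsub b u e * (x / b ^ e) + hsub b u (x % b ^ e) :=
      add_lt_add_of_lt_of_le (Nat.mul_lt_mul_of_pos_right hpow hdigit) (le_hsub hbu.le _)

end hsub

section G

variable {j : ℕ} (m : ℕ)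

theorem G_succ (hj : 1 ≤ j) : G (j + 1) m = B (j + 1) (G j m) - 1 := by
  obtain ⟨k, rfl⟩ : ∃ k, j = k + 1 := ⟨j - 1, by omega⟩
  rfl

theorem G_le_G_succ (hj : 1 ≤ j) (h : j < G j m) : G j m ≤ G (j + 1) m := by
  have := lt_hsub (b := j + 1) (u := j + 1 + 1) (by omega) (by omega) h
  rw [G_succ m hj, B]
  omega

theorem G_succ_of_le (hj : 1 ≤ j) (h : G j m ≤ j) : G (j + 1) m = G j m - 1 := by
  rw [G_succ m hj, B, hsub_of_lt (by omega)]

theorem G_add_of_le (hj : 1 ≤ j) (h : G j m ≤ j) (t : ℕ) : G (j + t) m = G j m - t := by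
  induction t with
  | zero => rfl
  | succ t ih =>
    rw [← add_assoc, G_succ_of_le m (by omega) (by omega), ih]
    omega

end G

/-- **Lemma 6**: let `m ≥ 2` and let `n` be the least natural number (`n ≥ 1`)
with `G n m = 0`. Then `n = 2 * n₁` with `n₁ ≥ 2`, and `G (n₁ - 1) m = n₁`
(i.e., the hereditary representation of the `(n₁-1)`-th term in its base `n₁`
is `1·n₁^1 + 0·n₁^0`). -/
theorem goodstein_lemma6 (m n : ℕ) (hm : 2 ≤ m) (hn1 : 1 ≤ n) (hn : G n m = 0)
    (hmin : ∀ j : ℕ, 1 ≤ j → G j m = 0 → n ≤ j) :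
    ∃ n₁ : ℕ, 2 ≤ n₁ ∧ n = 2 * n₁ ∧ G (n₁ - 1) m = n₁ := by
  have hex : ∃ j, 1 ≤ j ∧ G j m ≤ j := ⟨n, hn1, by omega⟩
  set n₁ := Nat.find hex
  obtain ⟨hn₁_pos, hn₁_le⟩ : 1 ≤ n₁ ∧ G n₁ m ≤ n₁ := Nat.find_spec hex
  have above_base : ∀ j, 1 ≤ j → j < n₁ → j < G j m := fun j hj hjn => by
    have := Nat.find_min hex hjn
    omega
  have hn₁_ne_one : n₁ ≠ 1 := fun h1 => by
    have : G 1 m ≤ 1 := h1 ▸ hn₁_le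
    exact absurd this (show ¬m ≤ 1 by omega)
  obtain ⟨hprev, hn₁_eq⟩ : G (n₁ - 1) m = n₁ ∧ G n₁ m = n₁ := by
    have hbase := above_base (n₁ - 1) (by omega) (by omega)
    have hmono := G_le_G_succ m (by omega) hbase
    rw [Nat.sub_add_cancel hn₁_pos] at hmono
    omega
  have hcount (t : ℕ) : G (n₁ + t) m = n₁ - t := by
    rw [G_add_of_le m hn₁_pos hn₁_le, hn₁_eq]
  refine ⟨n₁, by omega, le_antisymm ?_ ?_, hprev⟩
  · exact hmin _ (by omega) (by rw [two_mul, hcount, Nat.sub_self])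
  · by_contra! h
    rcases lt_or_ge n n₁ with h' | h'
    · have := above_base n hn1 h'
      omega
    · have := hcount (n - n₁)
      rw [Nat.add_sub_cancel' h'] at this
      omega
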